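/- Let q ≥ 2, p = q − 1, and let a_1,…,a_p, b_1,…,b_q be positive reals. Define c = max_{1≤i≤q} [e_i(b_1,…,b_q) − e_i(a_1,…,a_p)] / e_{i-1}(a_1,…,a_p), with the conventions e_0 = 1 and e_q(a_1,…,a_p) = 0. Then c > 0 and for every natural number n ≥ 1, f_n ≥ 1/(c)_n, where f_n = ∏_{i=1}^p (a_i)_n / ∏_{i=1}^q (b_i)_n and (c)_n is the rising factorial. Consequently, for all x ≥ 0, {p}F{q}(a;b;x) ≥ 0F1(-;c;x) = ∑_{n≥0} x^n/((c)_n n!). -/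

import Mathlib

open Finset Real MeasureTheory

noncomputable def rise (a : ℝ) (n : ℕ) : ℝ := ∏ k ∈ Finset.range n, (a + k)

noncomputable def esym {q : ℕ} (k : ℕ) (a : Fin q → ℝ) : ℝ :=
  ∑ s ∈ Finset.powersetCard k (Finset.univ : Finset (Fin q)), ∏ i ∈ s, a i

/-! Since `e_i(a₁, …, a_p, c) = e_i(a) + c e_{i-1}(a)`, the choice of `c` says exactly that
`e_i(b) ≤ e_i(a₁, …, a_p, c)` for every `i`. Expanding `∏ (v_j + x) = ∑ e_k(v) x^(q-k)` and
comparing coefficients gives `∏ (b_j + k) ≤ (c + k) ∏ (a_i + k)` for all `k ≥ 0`; multiplying over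
`k < n` gives `∏ (b_j)_n ≤ (c)_n ∏ (a_i)_n`, and the series inequality follows termwise. The
quotient for `i = q` is `e_q(b) / e_p(a) > 0`, so `c > 0`. The `pFq` series converges because
`p ≤ q` and `min(a, 1)ⁿ n! ≤ (a)_n ≤ max(a, 1)ⁿ n!`. -/

theorem Multiset.esymm_cons_succ {R : Type*} [CommSemiring R] (s : Multiset R) (r : R) (k : ℕ) :
    (r ::ₘ s).esymm (k + 1) = s.esymm (k + 1) + r * s.esymm k := by
  simp [Multiset.esymm, Multiset.powersetCard_cons, Multiset.sum_map_mul_left]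

lemma esym_zero {q : ℕ} (v : Fin q → ℝ) : esym 0 v = 1 := by
  simp [esym]

lemma esym_pos {q k : ℕ} {v : Fin q → ℝ} (hv : ∀ i, 0 < v i) (hk : k ≤ q) : 0 < esym k v :=
  sum_pos (fun s _ => prod_pos fun i _ => hv i) (powersetCard_nonempty.2 (by simpa using hk))

lemma esym_eq_zero_of_lt {q k : ℕ} (v : Fin q → ℝ) (hk : q < k) : esym k v = 0 := by
  rw [esym, powersetCard_eq_empty.2 (by simpa using hk), sum_empty]

lemma esym_eq_esymm {q : ℕ} (k : ℕ) (v : Fin q → ℝ) :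
    esym k v = (univ.val.map v).esymm k :=
  (Finset.esymm_map_val v univ k).symm

lemma esym_cons_succ {p : ℕ} (k : ℕ) (c : ℝ) (v : Fin p → ℝ) :
    esym (k + 1) (Fin.cons c v : Fin (p + 1) → ℝ) = esym (k + 1) v + c * esym k v := by
  simp only [esym_eq_esymm, Fin.univ_val_map, List.ofFn_succ, Fin.cons_zero, Fin.cons_succ]
  rw [← Multiset.cons_coe, Multiset.esymm_cons_succ]

lemma prod_add_eq_sum_esym {q : ℕ} (v : Fin q → ℝ) (x : ℝ) :
    ∏ i, (v i + x) = ∑ k ∈ range (q + 1), esym k v * x ^ (q - k) := by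
  have := congrArg (Polynomial.eval x) (Multiset.prod_X_add_C_eq_sum_esymm (univ.val.map v))
  simp only [Multiset.map_map, Polynomial.eval_multiset_prod, Multiset.card_map, card_val,
    card_univ, Fintype.card_fin, Polynomial.eval_finsetSum, Polynomial.eval_mul,
    Polynomial.eval_C, Polynomial.eval_pow, Polynomial.eval_X] at this
  rw [prod_eq_multiset_prod]
  simpa [esym_eq_esymm, add_comm] using this

lemma prod_add_le_prod_add_of_esym_le {q : ℕ} {u v : Fin q → ℝ}
    (h : ∀ k ≤ q, esym k u ≤ esym k v) {x : ℝ} (hx : 0 ≤ x) :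
    ∏ i, (u i + x) ≤ ∏ i, (v i + x) := by
  rw [prod_add_eq_sum_esym, prod_add_eq_sum_esym]
  exact sum_le_sum fun k hk =>
    mul_le_mul_of_nonneg_right (h k (Nat.lt_succ_iff.1 (mem_range.1 hk))) (pow_nonneg hx _)

lemma rise_pos {a : ℝ} (ha : 0 < a) (n : ℕ) : 0 < rise a n :=
  prod_pos fun k _ => by positivity

lemma prod_rise_le_prod_rise {ι κ : Type*} [Fintype ι] [Fintype κ] {u : ι → ℝ} {v : κ → ℝ}
    (hu : ∀ i, 0 ≤ u i) (h : ∀ k : ℕ, ∏ i, (u i + k) ≤ ∏ j, (v j + k)) (n : ℕ) :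
    ∏ i, rise (u i) n ≤ ∏ j, rise (v j) n := by
  simp only [rise]
  rw [prod_comm, prod_comm (s := univ)]
  exact prod_le_prod (fun k _ => prod_nonneg fun i _ => add_nonneg (hu i) k.cast_nonneg)
    fun k _ => h k

lemma prod_range_mul_succ_eq (m : ℝ) (n : ℕ) :
    ∏ k ∈ range n, m * ((k : ℝ) + 1) = m ^ n * n.factorial := by
  rw [prod_mul_distrib, prod_const, card_range, ← prod_range_add_one_eq_factorial]
  push_cast
  rfl

lemma rise_le_pow_mul_factorial {a : ℝ} (ha : 0 ≤ a) (n : ℕ) :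
    rise a n ≤ max a 1 ^ n * n.factorial := by
  rw [← prod_range_mul_succ_eq]
  refine prod_le_prod (fun k _ => by positivity) fun k _ => ?_
  nlinarith [le_max_left a 1, le_max_right a 1, (Nat.cast_nonneg k : (0 : ℝ) ≤ k)]

lemma pow_mul_factorial_le_rise {a : ℝ} (ha : 0 ≤ a) (n : ℕ) :
    min a 1 ^ n * n.factorial ≤ rise a n := by
  rw [← prod_range_mul_succ_eq]
  refine prod_le_prod (fun k _ => by positivity) fun k _ => ?_
  nlinarith [min_le_left a 1, min_le_right a 1, (Nat.cast_nonneg k : (0 : ℝ) ≤ k)]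

section HypergeometricTerm

variable {ι κ : Type*} [Fintype ι] [Fintype κ] {a : ι → ℝ} {b : κ → ℝ}

lemma prod_rise_div_prod_rise_le (ha : ∀ i, 0 ≤ a i) (hb : ∀ j, 0 < b j)
    (hcard : Fintype.card ι ≤ Fintype.card κ) (n : ℕ) :
    (∏ i, rise (a i) n) / (∏ j, rise (b j) n)
      ≤ ((∏ i, max (a i) 1) / ∏ j, min (b j) 1) ^ n := by
  have hfac : (1 : ℝ) ≤ n.factorial := by exact_mod_cast n.factorial_pos
  have hA : ∏ i, rise (a i) n ≤ (∏ i, max (a i) 1) ^ n * (n.factorial : ℝ) ^ Fintype.card κ :=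
    calc ∏ i, rise (a i) n ≤ ∏ i, (max (a i) 1 ^ n * n.factorial) :=
          prod_le_prod (fun i _ => prod_nonneg fun k _ => by have := ha i; positivity)
            fun i _ => rise_le_pow_mul_factorial (ha i) n
      _ = (∏ i, max (a i) 1) ^ n * (n.factorial : ℝ) ^ Fintype.card ι := by
          rw [prod_mul_distrib, prod_pow, prod_const, card_univ]
      _ ≤ _ := by gcongr
  have hB : (∏ j, min (b j) 1) ^ n * (n.factorial : ℝ) ^ Fintype.card κ ≤ ∏ j, rise (b j) n :=
    calc _ = ∏ j, (min (b j) 1 ^ n * n.factorial) := by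
          rw [prod_mul_distrib, prod_pow, prod_const, card_univ]
      _ ≤ _ := prod_le_prod (fun j _ => by have := hb j; positivity)
            fun j _ => pow_mul_factorial_le_rise (hb j).le n
  have hBpos : 0 < ∏ j, min (b j) 1 := prod_pos fun j _ => lt_min (hb j) one_pos
  rw [div_le_iff₀ (prod_pos fun j _ => rise_pos (hb j) n)]
  calc _ ≤ _ := hA
    _ = ((∏ i, max (a i) 1) / ∏ j, min (b j) 1) ^ n
          * ((∏ j, min (b j) 1) ^ n * (n.factorial : ℝ) ^ Fintype.card κ) := by
        rw [div_pow]; field_simp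
    _ ≤ _ := by gcongr

lemma summable_prod_rise_div_prod_rise (ha : ∀ i, 0 ≤ a i) (hb : ∀ j, 0 < b j)
    (hcard : Fintype.card ι ≤ Fintype.card κ) (x : ℝ) :
    Summable fun n : ℕ => (∏ i, rise (a i) n) / (∏ j, rise (b j) n) * x ^ n / n.factorial := by
  set C := (∏ i, max (a i) 1) / ∏ j, min (b j) 1
  refine .of_norm_bounded (Real.summable_pow_div_factorial (C * |x|)) fun n => ?_
  have hratio := prod_rise_div_prod_rise_le ha hb hcard n
  have hnonneg : 0 ≤ (∏ i, rise (a i) n) / (∏ j, rise (b j) n) :=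
    div_nonneg (prod_nonneg fun i _ => prod_nonneg fun k _ => by have := ha i; positivity)
      (prod_pos fun j _ => rise_pos (hb j) n).le
  rw [Real.norm_eq_abs, abs_div, abs_mul, abs_of_nonneg hnonneg, abs_pow, Nat.abs_cast, mul_pow]
  gcongr

end HypergeometricTerm

noncomputable def esymQuotients {p : ℕ} (a : Fin p → ℝ) (b : Fin (p + 1) → ℝ) : Set ℝ :=
  {y | ∃ i : ℕ, 1 ≤ i ∧ i ≤ p + 1 ∧ y = (esym i b - esym i a) / esym (i - 1) a}

section UpperBound

variable {p : ℕ} {a : Fin p → ℝ} {b : Fin (p + 1) → ℝ} {c : ℝ}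

lemma pos_of_mem_upperBounds_esymQuotients (ha : ∀ i, 0 < a i) (hb : ∀ j, 0 < b j)
    (hc : c ∈ upperBounds (esymQuotients a b)) :
    0 < c := by
  have hlast := hc ⟨p + 1, by omega, le_rfl, rfl⟩
  rw [esym_eq_zero_of_lt a p.lt_succ_self, sub_zero, Nat.add_sub_cancel] at hlast
  exact (div_pos (esym_pos hb le_rfl) (esym_pos ha le_rfl)).trans_le hlast

lemma esym_le_esym_cons_of_mem_upperBounds_esymQuotients (ha : ∀ i, 0 < a i)
    (hc : c ∈ upperBounds (esymQuotients a b)) :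
    ∀ k ≤ p + 1, esym k b ≤ esym k (Fin.cons c a : Fin (p + 1) → ℝ) := by
  rintro (_ | k) hk
  · rw [esym_zero, esym_zero]
  · have hquot := hc ⟨k + 1, by omega, hk, rfl⟩
    rw [Nat.add_sub_cancel, div_le_iff₀ (esym_pos ha (by omega))] at hquot
    rw [esym_cons_succ]
    linarith

end UpperBound

theorem stmt7 (q : ℕ) (hq : 2 ≤ q) (a : Fin (q - 1) → ℝ) (b : Fin q → ℝ)
    (ha : ∀ i, 0 < a i) (hb : ∀ i, 0 < b i) (c : ℝ)
    (hc : IsGreatest {y : ℝ | ∃ i : ℕ, 1 ≤ i ∧ i ≤ q ∧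
      y = (esym i b - esym i a) / esym (i - 1) a} c) :
    0 < c ∧
    (∀ n : ℕ, 1 ≤ n →
      1 / rise c n ≤ (∏ i, rise (a i) n) / (∏ i, rise (b i) n)) ∧
    (∀ x : ℝ, 0 ≤ x →
      (∑' n : ℕ, x ^ n / (rise c n * (Nat.factorial n)))
        ≤ ∑' n : ℕ, (∏ i, rise (a i) n) / (∏ i, rise (b i) n) * x ^ n / (Nat.factorial n)) := by
  obtain ⟨p, rfl⟩ : ∃ p, q = p + 1 := ⟨q - 1, by omega⟩
  have hc0 : 0 < c := pos_of_mem_upperBounds_esymQuotients ha hb hc.2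
  have hprod (n : ℕ) : ∏ j, rise (b j) n ≤ rise c n * ∏ i, rise (a i) n := by
    have hesym := esym_le_esym_cons_of_mem_upperBounds_esymQuotients ha hc.2
    simpa only [Fin.prod_univ_succ, Fin.cons_zero, Fin.cons_succ] using
      prod_rise_le_prod_rise (fun j => (hb j).le)
        (fun k => prod_add_le_prod_add_of_esym_le hesym k.cast_nonneg) n
  have hcoeff (n : ℕ) : 1 / rise c n ≤ (∏ i, rise (a i) n) / (∏ j, rise (b j) n) := by
    rw [div_le_div_iff₀ (rise_pos hc0 n) (prod_pos fun j _ => rise_pos (hb j) n), one_mul,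
      mul_comm]
    exact hprod n
  refine ⟨hc0, fun n _ => hcoeff n, fun x hx => ?_⟩
  have hterm (n : ℕ) : x ^ n / (rise c n * n.factorial)
      ≤ (∏ i, rise (a i) n) / (∏ j, rise (b j) n) * x ^ n / n.factorial := by
    calc x ^ n / (rise c n * n.factorial) = 1 / rise c n * (x ^ n / n.factorial) := by ring
      _ ≤ (∏ i, rise (a i) n) / (∏ j, rise (b j) n) * (x ^ n / n.factorial) :=
          mul_le_mul_of_nonneg_right (hcoeff n) (by positivity)
      _ = _ := (mul_div_assoc ..).symm
  have hsum := summable_prod_rise_div_prod_rise (fun i => (ha i).le) hb (by simp) x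
  refine Summable.tsum_le_tsum hterm (hsum.of_nonneg_of_le (fun n => ?_) hterm) hsum
  have := rise_pos hc0 n
  positivity
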